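/- arXiv:1209.1867 — 2 statements merged into one kernel-verified Lean document; each statement's English description precedes it below -/
import Mathlib

section
/- For λ in an algebraically closed field k of characteristic 0 with λ^2 ≠ 108 and λ^2 ≠ -108, the polynomial G_λ(X) = X^12 - 33X^8 - 33X^4 + 1 - λ·X^2(X^4-1)^2 = X^12 - λX^10 - 33X^8 + 2λX^6 - 33X^4 - λX^2 + 1 is separable, i.e. it has 12 distinct roots (no repeated roots). -/
open Polynomial

/-- For `λ` in an algebraically closed field of characteristic 0 with `λ² ≠ 108` and
`λ² ≠ -108`, the polynomial `G_λ(X) = X^12 - λX^10 - 33X^8 + 2λX^6 - 33X^4 - λX^2 + 1`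
has no repeated roots, i.e. it is squarefree. -/
theorem stmt_2 (k : Type*) [Field k] [IsAlgClosed k] [CharZero k] (lam : k)
    (h1 : lam ^ 2 ≠ 108) (h2 : lam ^ 2 ≠ -108) :
    Squarefree ((X : k[X]) ^ 12 - C lam * X ^ 10 - 33 * X ^ 8 + 2 * C lam * X ^ 6
      - 33 * X ^ 4 - C lam * X ^ 2 + 1) := by
  set g : k[X] := X ^ 12 - C lam * X ^ 10 - 33 * X ^ 8 + 2 * C lam * X ^ 6
      - 33 * X ^ 4 - C lam * X ^ 2 + 1 with hg
  have hd : derivative g = 12 * X ^ 11 - 10 * C lam * X ^ 9 - 264 * X ^ 7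
      + 12 * C lam * X ^ 5 - 132 * X ^ 3 - 2 * C lam * X := by
    rw [hg]
    simp only [derivative_add, derivative_sub, derivative_mul, derivative_C,
      derivative_X_pow, derivative_one, derivative_ofNat, Nat.cast_ofNat, map_ofNat]
    push_cast
    ring
  -- Bezout cofactors
  set S : k[X] := (512 * C lam ^ 2 + 55296) + 29140 * C lam * X ^ 2
      + (98472 - 3070 * C lam ^ 2) * X ^ 4 + 71072 * C lam * X ^ 6
      + (2550 * C lam ^ 2 - 4488) * X ^ 8 - 3060 * C lam * X ^ 10 with hS
  set T : k[X] := (-13078 - 256 * C lam ^ 2) * X - 7657 * C lam * X ^ 3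
      + (511 * C lam ^ 2 - 12320) * X ^ 5 - 8790 * C lam * X ^ 7
      + (374 - 255 * C lam ^ 2) * X ^ 9 + 255 * C lam * X ^ 11 with hT
  have key : S * g + T * derivative g = C (512 * (lam ^ 2 + 108)) := by
    rw [hd, hg, hS, hT]
    simp only [map_mul, map_add, map_pow, map_ofNat]
    ring
  have hc : (512 : k) * (lam ^ 2 + 108) ≠ 0 := by
    have h108 : lam ^ 2 + 108 ≠ 0 := by
      intro h; exact h2 (by linear_combination h)
    exact mul_ne_zero (by norm_num) h108
  have hsep : g.Separable := by
    refine ⟨C ((512 * (lam ^ 2 + 108))⁻¹) * S, C ((512 * (lam ^ 2 + 108))⁻¹) * T, ?_⟩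
    have : C ((512 * (lam ^ 2 + 108))⁻¹) * (S * g + T * derivative g) = 1 := by
      rw [key, ← map_mul, inv_mul_cancel₀ hc, map_one]
    linear_combination this
  exact hsep.squarefree
end

section
/- If t ∈ ℂ with t(t^4-1) ≠ 0 and λ = (t^12 - 33t^8 - 33t^4 + 1)/(t^2(t^4-1)^2), then ∏_{j=1}^{12} (X - α_j) = X^12 - λX^10 - 33X^8 + 2λX^6 - 33X^4 - λX^2 + 1, where α_1, ..., α_12 is the A_4-orbit {±t, ±1/t, ±(t-i)/(t+i), ±(t+i)/(t-i), ±i(t+1)/(t-1), ±i(t-1)/(t+1)} of t. -/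
open Polynomial

/-- For `t ∈ ℂ` with `t(t⁴-1) ≠ 0` (and `t ≠ ±i`), setting
`λ = (t^12 - 33t^8 - 33t^4 + 1)/(t^2(t^4-1)^2)`, the product of `X - α` over the
`A₄`-orbit `{±t, ±1/t, ±(t-i)/(t+i), ±(t+i)/(t-i), ±i(t+1)/(t-1), ±i(t-1)/(t+1)}` of `t`
equals `G_λ(X) = X^12 - λX^10 - 33X^8 + 2λX^6 - 33X^4 - λX^2 + 1`. -/
theorem stmt_4 (i t : ℂ) (hi : i ^ 2 = -1)
    (h0 : t ≠ 0) (h1 : t ≠ 1) (hm1 : t ≠ -1) (hti : t ≠ i) (htmi : t ≠ -i)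
    (lam : ℂ) (hlam : lam = (t ^ 12 - 33 * t ^ 8 - 33 * t ^ 4 + 1) /
      (t ^ 2 * (t ^ 4 - 1) ^ 2)) :
    (X - C t) * (X - C (-t)) *
    (X - C (1 / t)) * (X - C (-(1 / t))) *
    (X - C ((t - i) / (t + i))) * (X - C (-((t - i) / (t + i)))) *
    (X - C ((t + i) / (t - i))) * (X - C (-((t + i) / (t - i)))) *
    (X - C (i * (t + 1) / (t - 1))) * (X - C (-(i * (t + 1) / (t - 1)))) *
    (X - C (i * (t - 1) / (t + 1))) * (X - C (-(i * (t - 1) / (t + 1))))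
      = (X : ℂ[X]) ^ 12 - C lam * X ^ 10 - 33 * X ^ 8 + 2 * C lam * X ^ 6
        - 33 * X ^ 4 - C lam * X ^ 2 + 1 := by
  have hp : t + i ≠ 0 := fun h => htmi (by linear_combination h)
  have hm : t - i ≠ 0 := sub_ne_zero.mpr hti
  have hp1 : t + 1 ≠ 0 := fun h => hm1 (by linear_combination h)
  have hm1' : t - 1 ≠ 0 := sub_ne_zero.mpr h1
  have h2p : t ^ 2 + 1 ≠ 0 := by
    have e : t ^ 2 + 1 = (t + i) * (t - i) := by linear_combination hi
    rw [e]; exact mul_ne_zero hp hm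
  have h2m : t ^ 2 - 1 ≠ 0 := by
    have e : t ^ 2 - 1 = (t + 1) * (t - 1) := by ring
    rw [e]; exact mul_ne_zero hp1 hm1'
  have h4 : t ^ 4 - 1 ≠ 0 := by
    have e : t ^ 4 - 1 = (t ^ 2 + 1) * (t ^ 2 - 1) := by ring
    rw [e]; exact mul_ne_zero h2p h2m
  have hab : (t - i) / (t + i) * ((t + i) / (t - i)) = 1 := by
    field_simp
  have hcd : (i * (t + 1) / (t - 1)) * (i * (t - 1) / (t + 1)) = -1 := by
    field_simp
    linear_combination hi
  have hA : ((t - i) / (t + i)) ^ 2 + ((t + i) / (t - i)) ^ 2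
      = 2 * (t ^ 4 - 6 * t ^ 2 + 1) / (t ^ 2 + 1) ^ 2 := by
    field_simp
    linear_combination 16 * t ^ 2 * (i ^ 2 + t ^ 4) * hi
  have hC : (i * (t + 1) / (t - 1)) ^ 2 + (i * (t - 1) / (t + 1)) ^ 2
      = -(2 * (t ^ 4 + 6 * t ^ 2 + 1)) / (t ^ 2 - 1) ^ 2 := by
    field_simp
    linear_combination 2 * (t ^ 8 + 4 * t ^ 6 - 10 * t ^ 4 + 4 * t ^ 2 + 1) * hi
  apply Polynomial.funext
  intro x
  simp only [eval_mul, eval_sub, eval_add, eval_pow, eval_X, eval_C, eval_one, eval_ofNat,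
    eval_neg]
  have key : (x - t) * (x - -t) * (x - 1 / t) * (x - -(1 / t)) *
      (x - (t - i) / (t + i)) * (x - -((t - i) / (t + i))) *
      (x - (t + i) / (t - i)) * (x - -((t + i) / (t - i))) *
      (x - i * (t + 1) / (t - 1)) * (x - -(i * (t + 1) / (t - 1))) *
      (x - i * (t - 1) / (t + 1)) * (x - -(i * (t - 1) / (t + 1)))
      = (x ^ 2 - t ^ 2) * (x ^ 2 - (1 / t) ^ 2) *
        (x ^ 4 - (((t - i) / (t + i)) ^ 2 + ((t + i) / (t - i)) ^ 2) * x ^ 2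
          + ((t - i) / (t + i) * ((t + i) / (t - i))) ^ 2) *
        (x ^ 4 - ((i * (t + 1) / (t - 1)) ^ 2 + (i * (t - 1) / (t + 1)) ^ 2) * x ^ 2
          + ((i * (t + 1) / (t - 1)) * (i * (t - 1) / (t + 1))) ^ 2) := by
    ring
  rw [key, hA, hC, hab, hcd, hlam]
  field_simp
  ring
end
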